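/- Suppose the estimator Ŵ = β·ÛÛᵀ with β = 1/(1+σ²) satisfies ‖Û_⊥ᵀU‖ ≤ ε (spectral norm) for some ε ≥ 0. Then R(Ŵ) ≤ σ²/(1+σ²) + ((1+2σ²)/(1+σ²)²)·ε² ≤ σ²/(1+σ²) + ε². -/
import Mathlib

open Matrix

noncomputable def specNorm {m n : ℕ} (A : Matrix (Fin m) (Fin n) ℝ) : ℝ :=
  ‖LinearMap.toContinuousLinearMap (Matrix.toEuclideanLin A)‖

lemma col_sq_le {m k : ℕ} (A : Matrix (Fin m) (Fin k) ℝ) (j : Fin k) :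
    ∑ i, (A i j) ^ 2 ≤ (specNorm A) ^ 2 := by
  have hv := (LinearMap.toContinuousLinearMap (Matrix.toEuclideanLin A)).le_opNorm
      ((WithLp.equiv 2 (Fin k → ℝ)).symm (Pi.single j 1))
  have hn : ‖(WithLp.equiv 2 (Fin k → ℝ)).symm (Pi.single j (1:ℝ))‖ = 1 := by
    rw [EuclideanSpace.norm_eq]
    rw [show ∑ i, ‖((WithLp.equiv 2 (Fin k → ℝ)).symm (Pi.single j (1:ℝ))) i‖^2 = 1 by
      rw [Finset.sum_eq_single j]
      · simp
      · intro b _ hb; simp [Pi.single_apply, hb]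
      · simp]
    exact Real.sqrt_one
  rw [hn, mul_one] at hv
  have hy : (LinearMap.toContinuousLinearMap (Matrix.toEuclideanLin A))
      ((WithLp.equiv 2 (Fin k → ℝ)).symm (Pi.single j 1))
      = (WithLp.equiv 2 (Fin m → ℝ)).symm (A *ᵥ Pi.single j 1) := rfl
  have hAv : (A *ᵥ Pi.single j 1) = fun i => A i j := by
    funext i; simp [Matrix.mulVec_single]
  have hnorm : ‖(WithLp.equiv 2 (Fin m → ℝ)).symm (A *ᵥ Pi.single j 1)‖ ^ 2
      = ∑ i, (A i j) ^ 2 := by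
    rw [EuclideanSpace.norm_eq, Real.sq_sqrt (by positivity)]
    simp [hAv]
  rw [hy] at hv
  calc ∑ i, (A i j) ^ 2 = _ := hnorm.symm
    _ ≤ (specNorm A) ^ 2 := pow_le_pow_left₀ (norm_nonneg _) hv 2

lemma frob_sq_le {m k : ℕ} (A : Matrix (Fin m) (Fin k) ℝ) :
    ∑ i, ∑ j, (A i j) ^ 2 ≤ (k : ℝ) * (specNorm A) ^ 2 := by
  rw [Finset.sum_comm]
  calc ∑ j, ∑ i, (A i j) ^ 2 ≤ ∑ _j : Fin k, (specNorm A) ^ 2 :=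
        Finset.sum_le_sum fun j _ => col_sq_le A j
    _ = (k : ℝ) * (specNorm A) ^ 2 := by simp [mul_comm]

lemma sum_sq_eq_trace {m k : ℕ} (A : Matrix (Fin m) (Fin k) ℝ) :
    ∑ i, ∑ j, (A i j) ^ 2 = Matrix.trace (Aᵀ * A) := by
  rw [Finset.sum_comm]
  simp [Matrix.trace, Matrix.mul_apply, Matrix.diag, sq]

lemma real_bound (d σ t ε : ℝ) (hd : 0 < d) (hσc : 0 < 1 + σ^2) (ht0 : 0 ≤ t)
    (htle : t ≤ d * ε^2) :
    (1/d) * (((1/(1+σ^2))^2 - 2*(1/(1+σ^2))) * (d - t) + d)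
      + σ^2/d * ((1/(1+σ^2)) * (1/(1+σ^2)) * d)
    ≤ σ^2/(1+σ^2) + ((1 + 2*σ^2)/(1+σ^2)^2) * ε^2 := by
  have key : (1/d) * (((1/(1+σ^2))^2 - 2*(1/(1+σ^2))) * (d - t) + d)
      + σ^2/d * ((1/(1+σ^2)) * (1/(1+σ^2)) * d)
      = σ^2/(1+σ^2) + ((1 + 2*σ^2)/(1+σ^2)^2) * (t/d) := by
    field_simp
    ring
  rw [key]
  have hcoef : (0:ℝ) ≤ (1 + 2*σ^2)/(1+σ^2)^2 := by positivity
  have htd : t / d ≤ ε ^ 2 := by rw [div_le_iff₀ hd]; linarith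
  nlinarith [mul_le_mul_of_nonneg_left htd hcoef]

/-- **Risk bound for the PCA estimator under a subspace-angle bound.**
If `‖Û⊥ᵀ U‖ ≤ ε` (spectral norm), then the estimator `Ŵ = (1/(1+σ²)) Û Ûᵀ` satisfies
`R(Ŵ) ≤ σ²/(1+σ²) + ((1+2σ²)/(1+σ²)²) ε² ≤ σ²/(1+σ²) + ε²`. -/
theorem risk_bound_pca_estimator
    (n d : ℕ) (hd : 0 < d) (σ : ℝ) (hσ : 0 < σ ^ 2)
    (U Uhat : Matrix (Fin n) (Fin d) ℝ)
    (Uperp : Matrix (Fin n) (Fin (n - d)) ℝ)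
    (hU : Uᵀ * U = 1)
    (hUhat : Uhatᵀ * Uhat = 1)
    (hUperp : Uperpᵀ * Uperp = 1)
    (hcomp : Uhat * Uhatᵀ + Uperp * Uperpᵀ = 1)
    (ε : ℝ) (hε : 0 ≤ ε)
    (hangle : specNorm (Uperpᵀ * U) ≤ ε) :
    (1 / (d : ℝ)) * ∑ i, ∑ j,
        ((((1 / (1 + σ ^ 2)) • (Uhat * Uhatᵀ) - 1) * U : Matrix (Fin n) (Fin d) ℝ) i j) ^ 2
      + (σ ^ 2 / (d : ℝ)) * ∑ i, ∑ j,
        ((((1 / (1 + σ ^ 2)) • (Uhat * Uhatᵀ) : Matrix (Fin n) (Fin n) ℝ)) i j) ^ 2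
      ≤ σ ^ 2 / (1 + σ ^ 2) + ((1 + 2 * σ ^ 2) / (1 + σ ^ 2) ^ 2) * ε ^ 2
    ∧ σ ^ 2 / (1 + σ ^ 2) + ((1 + 2 * σ ^ 2) / (1 + σ ^ 2) ^ 2) * ε ^ 2
      ≤ σ ^ 2 / (1 + σ ^ 2) + ε ^ 2 := by
  have hdpos : (0:ℝ) < d := by exact_mod_cast hd
  have hc : (0:ℝ) < 1 + σ ^ 2 := by nlinarith
  set β : ℝ := 1 / (1 + σ ^ 2) with hβ
  set P : Matrix (Fin n) (Fin n) ℝ := Uhat * Uhatᵀ with hP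
  set M : Matrix (Fin (n-d)) (Fin d) ℝ := Uperpᵀ * U with hM
  set t : ℝ := Matrix.trace (Mᵀ * M) with ht
  have hPsymm : Pᵀ = P := by rw [hP, Matrix.transpose_mul, Matrix.transpose_transpose]
  have hPP : P * P = P := by
    rw [hP, Matrix.mul_assoc, ← Matrix.mul_assoc Uhatᵀ, hUhat, Matrix.one_mul]
  -- trace of P
  have htrP : Matrix.trace P = (d : ℝ) := by
    rw [hP, Matrix.trace_mul_comm, hUhat, Matrix.trace_one]
    simp
  -- UᵀPU = 1 - MᵀM
  have hQ : P = 1 - Uperp * Uperpᵀ := by rw [← hcomp]; abel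
  have hMM : Uᵀ * (Uperp * Uperpᵀ) * U = Mᵀ * M := by
    rw [hM, Matrix.transpose_mul, Matrix.transpose_transpose]
    simp [Matrix.mul_assoc]
  have hUPU : Uᵀ * P * U = (1 : Matrix (Fin d) (Fin d) ℝ) - Mᵀ * M := by
    rw [hQ, Matrix.mul_sub, Matrix.mul_one, Matrix.sub_mul, hU, hMM]
  -- key matrix identity for term 1
  have hB : ((β • P - 1) * U)ᵀ * ((β • P - 1) * U)
      = (β^2 - 2*β) • (Uᵀ * P * U) + 1 := by
    have h1 : ((β • P - 1) * U)ᵀ = Uᵀ * (β • P - 1) := by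
      rw [Matrix.transpose_mul, Matrix.transpose_sub, Matrix.transpose_smul, hPsymm,
        Matrix.transpose_one]
    have h2 : (β • P - 1) * ((β • P - 1) * U) = ((β^2 - 2*β) • P + 1) * U := by
      rw [← Matrix.mul_assoc]
      congr 1
      simp only [Matrix.sub_mul, Matrix.mul_sub, Matrix.one_mul, Matrix.mul_one,
        Matrix.smul_mul, Matrix.mul_smul, smul_smul, hPP]
      module
    rw [h1, Matrix.mul_assoc, h2, Matrix.add_mul, Matrix.one_mul, Matrix.mul_add, hU,
      Matrix.smul_mul, Matrix.mul_smul, ← Matrix.mul_assoc]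
  -- sum 1
  have hsum1 : ∑ i, ∑ j, ((((β • P - 1) * U : Matrix (Fin n) (Fin d) ℝ)) i j) ^ 2
      = (β^2 - 2*β) * ((d : ℝ) - t) + d := by
    rw [sum_sq_eq_trace, hB, Matrix.trace_add, Matrix.trace_smul, hUPU, Matrix.trace_sub,
      Matrix.trace_one]
    simp [smul_eq_mul, ht]
  -- sum 2
  have hBP : (β • P)ᵀ * (β • P) = (β * β) • P := by
    rw [Matrix.transpose_smul, hPsymm, Matrix.smul_mul, Matrix.mul_smul, smul_smul, hPP]
  have hsum2 : ∑ i, ∑ j, (((β • P : Matrix (Fin n) (Fin n) ℝ)) i j) ^ 2 = β * β * d := by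
    rw [sum_sq_eq_trace, hBP, Matrix.trace_smul, htrP]
    simp [smul_eq_mul]
  -- bounds on t
  have ht0 : 0 ≤ t := by
    rw [ht, ← sum_sq_eq_trace]
    positivity
  have htle : t ≤ (d : ℝ) * ε ^ 2 := by
    have h1 := frob_sq_le M
    have h0 : 0 ≤ specNorm M := norm_nonneg _
    have h2 : (specNorm M) ^ 2 ≤ ε ^ 2 := pow_le_pow_left₀ h0 hangle 2
    rw [ht, ← sum_sq_eq_trace]
    calc ∑ i, ∑ j, (M i j)^2 ≤ (d:ℝ) * (specNorm M)^2 := h1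
      _ ≤ (d:ℝ) * ε ^ 2 := by nlinarith
  clear_value t
  rw [hsum1, hsum2]
  clear hB hBP hUPU hMM hQ htrP hPP hPsymm hcomp hU hUhat hUperp hangle ht hM hsum1 hsum2
  clear_value M
  clear M hP
  clear_value P
  clear P U Uhat Uperp
  constructor
  · rw [hβ]
    exact real_bound d σ t ε hdpos hc ht0 htle
  · have h1 : (1 + 2*σ^2)/(1+σ^2)^2 ≤ 1 := by
      rw [div_le_one (by positivity)]
      nlinarith [sq_nonneg (σ^2)]
    nlinarith [sq_nonneg ε, mul_le_mul_of_nonneg_right h1 (sq_nonneg ε)]
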